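/- arXiv:2101.08451 — 2 statements merged into one kernel-verified Lean document; each statement's English description precedes it below -/
import Mathlib

section
/- (Weak affirmative action.) Let V : [0,1] → ℝ be a continuous Bellman fixed point that is strictly decreasing on [0,1]. Then for every state φ0 with φ0* < φ0 < 1 and every θ0 ∈ Θ(φ0) attaining the supremum at φ0 (i.e., V(φ0) = R(φ0,θ0) + γ·V(S(φ0,θ0))), one has θ0 ≤ θ1(φ0,θ0). -/
/-- Advantaged-group threshold θ1(φ0,θ0) (for φ0 < 1). -/
noncomputable def θ1 (σ τ α φ0 θ0 : ℝ) : ℝ :=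
  (σ * (1 - α) + (1 - φ0) * τ - φ0 * θ0) / (1 - φ0)

/-- Admissible threshold set Θ(φ0). -/
def Θ (σ α φ0 : ℝ) : Set ℝ :=
  {θ0 | θ0 ∈ Set.Icc (0 : ℝ) σ ∧ φ0 * (1 - θ0 / σ) ≤ α ∧
    φ0 * (1 - θ0 / σ) + (1 - φ0) ≥ α}

/-- State transition S(φ0,θ0). -/
noncomputable def S (σ φ0 θ0 : ℝ) : ℝ := φ0 - (φ0 / (2 * σ)) * (σ ^ 2 - θ0 ^ 2)

/-- Reward function R(φ0,θ0), with the boundary convention at φ0 = 1. -/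
noncomputable def R (σ τ α φ0 θ0 : ℝ) : ℝ :=
  if φ0 < 1 then
    (φ0 / (2 * σ)) * (σ ^ 2 - θ0 ^ 2)
      + ((1 - φ0) / (2 * σ)) * ((σ + τ) ^ 2 - (θ1 σ τ α φ0 θ0) ^ 2)
  else (1 / (2 * σ)) * (σ ^ 2 - θ0 ^ 2)

/-- Bellman operator (T f)(φ0) = sup over admissible θ0 of R + γ f(S). -/
noncomputable def T (σ τ α γ : ℝ) (f : ℝ → ℝ) (φ0 : ℝ) : ℝ :=
  sSup ((fun θ0 => R σ τ α φ0 θ0 + γ * f (S σ φ0 θ0)) '' Θ σ α φ0)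

/-- The tipping point φ0*. -/
noncomputable def φstar (σ τ α γ : ℝ) : ℝ :=
  max 0 (min (1 - α)
    (1 - (α * σ / (2 * τ)) * (1 + Real.sqrt (1 + 2 * τ * γ / (1 - γ)))))

/-! If an optimal `θ0` exceeded `θ1 φ0 θ0`, it would also exceed the common threshold `c` at
which `θ1 φ0 c = c`. The reward `R φ0` is a concave quadratic with vertex `c`, and `c` is still
admissible, so switching from `θ0` to `c` raises the immediate reward; it also lowers the next
state `S φ0 ·`, which raises the continuation value because `V` is decreasing. Hence `c` beats
`θ0` in the Bellman equation. -/

def commonThreshold (σ τ α φ0 : ℝ) : ℝ := σ * (1 - α) + (1 - φ0) * τ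

section

variable {σ τ α γ φ0 : ℝ}

theorem θ1_lt_iff (hφ0 : φ0 < 1) {θ : ℝ} :
    θ1 σ τ α φ0 θ < θ ↔ commonThreshold σ τ α φ0 < θ := by
  have h : 0 < 1 - φ0 := by linarith
  rw [θ1, div_lt_iff₀ h, commonThreshold]
  constructor <;> intro <;> linarith

theorem R_sub_R (hσ : σ ≠ 0) (hφ0 : φ0 < 1) (a b : ℝ) :
    R σ τ α φ0 a - R σ τ α φ0 b
      = φ0 * (b - a) * (a + b - 2 * commonThreshold σ τ α φ0) / (2 * σ * (1 - φ0)) := by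
  have h : 1 - φ0 ≠ 0 := by linarith
  simp only [R, if_pos hφ0, θ1, commonThreshold]
  field_simp
  ring

theorem R_strictAntiOn (hσ : 0 < σ) (hφ0 : 0 < φ0) (hφ01 : φ0 < 1) :
    StrictAntiOn (R σ τ α φ0) (Set.Ici (commonThreshold σ τ α φ0)) := by
  intro a ha b _ hab
  have hpos : 0 < φ0 * (b - a) * (a + b - 2 * commonThreshold σ τ α φ0) / (2 * σ * (1 - φ0)) := by
    have : 0 < a + b - 2 * commonThreshold σ τ α φ0 := by linarith [Set.mem_Ici.1 ha]
    have : 0 < 1 - φ0 := by linarith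
    positivity
  linarith [R_sub_R (τ := τ) (α := α) hσ.ne' hφ01 a b]

theorem S_strictMonoOn (hσ : 0 < σ) (hφ0 : 0 < φ0) : StrictMonoOn (S σ φ0) (Set.Ici 0) := by
  intro a ha b _ hab
  have : a ^ 2 < b ^ 2 := pow_lt_pow_left₀ hab ha two_ne_zero
  have : 0 < φ0 / (2 * σ) := by positivity
  simp only [S]
  nlinarith

theorem S_mem_Icc (hσ : 0 < σ) (hσ2 : σ ≤ 2) (hφ0 : φ0 ∈ Set.Icc (0 : ℝ) 1) {θ : ℝ}
    (hθ : θ ∈ Set.Icc 0 σ) : S σ φ0 θ ∈ Set.Icc (0 : ℝ) 1 := by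
  obtain ⟨hφ0l, hφ0r⟩ := hφ0
  obtain ⟨hθl, hθr⟩ := hθ
  have hS : S σ φ0 θ = φ0 * (1 - (σ ^ 2 - θ ^ 2) / (2 * σ)) := by rw [S]; ring
  have hθsq : θ ^ 2 ≤ σ ^ 2 := pow_le_pow_left₀ hθl hθr 2
  have hlo : 0 ≤ (σ ^ 2 - θ ^ 2) / (2 * σ) := div_nonneg (by linarith) (by linarith)
  have hhi : (σ ^ 2 - θ ^ 2) / (2 * σ) ≤ 1 := by
    rw [div_le_one (by linarith)]
    nlinarith
  rw [hS]
  exact ⟨by nlinarith, by nlinarith⟩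

theorem commonThreshold_mem_Θ (hσ : 0 < σ) (hτ : 0 ≤ τ) (hα : 0 ≤ α) (hα1 : α ≤ 1)
    (hφ0 : φ0 ∈ Set.Icc (0 : ℝ) 1) {θ : ℝ} (hθ : θ ∈ Θ σ α φ0)
    (hcθ : commonThreshold σ τ α φ0 ≤ θ) : commonThreshold σ τ α φ0 ∈ Θ σ α φ0 := by
  obtain ⟨hφ0l, hφ0r⟩ := hφ0
  obtain ⟨⟨-, hθσ⟩, -, hθB⟩ := hθ
  set c := commonThreshold σ τ α φ0 with hc
  have hc0 : 0 ≤ c := by rw [hc, commonThreshold]; nlinarith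
  have hdiv : ∀ x, φ0 * (1 - x / σ) = φ0 * (σ - x) / σ := fun x => by field_simp
  refine ⟨⟨hc0, hcθ.trans hθσ⟩, ?_, ?_⟩
  · rw [hdiv, div_le_iff₀ hσ, hc, commonThreshold]
    nlinarith [mul_nonneg hφ0l (mul_nonneg (sub_nonneg.2 hφ0r) hτ),
      mul_nonneg (mul_nonneg hα hσ.le) (sub_nonneg.2 hφ0r)]
  · have : θ / σ ≥ c / σ := div_le_div_of_nonneg_right hcθ hσ.le
    nlinarith

theorem le_T_of_mem_Θ (hσ : 0 < σ) (hσ2 : σ ≤ 2) (hγ : 0 ≤ γ) {f : ℝ → ℝ}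
    (hf : AntitoneOn f (Set.Icc 0 1)) (hφ0 : φ0 ∈ Set.Ico (0 : ℝ) 1) {θ : ℝ}
    (hθ : θ ∈ Θ σ α φ0) : R σ τ α φ0 θ + γ * f (S σ φ0 θ) ≤ T σ τ α γ f φ0 := by
  obtain ⟨hφ0l, hφ0r⟩ := hφ0
  refine le_csSup ⟨(φ0 * σ ^ 2 + (1 - φ0) * (σ + τ) ^ 2) / (2 * σ) + γ * f 0, ?_⟩
    ⟨θ, hθ, rfl⟩
  rintro _ ⟨x, hx, rfl⟩
  have hR : R σ τ α φ0 x ≤ (φ0 * σ ^ 2 + (1 - φ0) * (σ + τ) ^ 2) / (2 * σ) := by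
    rw [R, if_pos hφ0r, le_div_iff₀ (by positivity)]
    field_simp
    nlinarith [mul_nonneg hφ0l (sq_nonneg x),
      mul_nonneg (sub_nonneg.2 hφ0r.le) (sq_nonneg (θ1 σ τ α φ0 x))]
  have hSx := S_mem_Icc hσ hσ2 ⟨hφ0l, hφ0r.le⟩ hx.1
  have hf0 : f (S σ φ0 x) ≤ f 0 := hf ⟨le_rfl, zero_le_one⟩ hSx hSx.1
  exact add_le_add hR (mul_le_mul_of_nonneg_left hf0 hγ)

end

theorem weak_affirmative_action_general (σ τ α γ : ℝ) (hσ : 0 < σ) (hτ : 0 < τ)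
    (hστ : σ + τ ≤ 1) (hα : 0 < α) (hα1 : α < 1) (hγ : 0 < γ)
    (V : ℝ → ℝ)
    (hVfix : ∀ φ0 ∈ Set.Icc (0 : ℝ) 1, V φ0 = T σ τ α γ V φ0)
    (hVdec : StrictAntiOn V (Set.Icc (0 : ℝ) 1))
    (φ0 : ℝ) (hφ0gt : φstar σ τ α γ < φ0) (hφ0lt : φ0 < 1)
    (θ0 : ℝ) (hθ0 : θ0 ∈ Θ σ α φ0)
    (hopt : V φ0 = R σ τ α φ0 θ0 + γ * V (S σ φ0 θ0)) :
    θ0 ≤ θ1 σ τ α φ0 θ0 := by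
  by_contra! hlt
  have hφ0 : 0 < φ0 := (le_max_left _ _).trans_lt hφ0gt
  have hφ0mem : φ0 ∈ Set.Icc (0 : ℝ) 1 := ⟨hφ0.le, hφ0lt.le⟩
  have hσ2 : σ ≤ 2 := by linarith
  set c := commonThreshold σ τ α φ0
  have hc : c < θ0 := (θ1_lt_iff hφ0lt).1 hlt
  have hcΘ : c ∈ Θ σ α φ0 := commonThreshold_mem_Θ hσ hτ.le hα.le hα1.le hφ0mem hθ0 hc.le
  have hR : R σ τ α φ0 θ0 < R σ τ α φ0 c :=
    R_strictAntiOn hσ hφ0 hφ0lt (Set.mem_Ici.2 le_rfl) (Set.mem_Ici.2 hc.le) hc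
  have hS : S σ φ0 c < S σ φ0 θ0 := S_strictMonoOn hσ hφ0 hcΘ.1.1 hθ0.1.1 hc
  have hV : V (S σ φ0 θ0) < V (S σ φ0 c) :=
    hVdec (S_mem_Icc hσ hσ2 hφ0mem hcΘ.1) (S_mem_Icc hσ hσ2 hφ0mem hθ0.1) hS
  have hT := le_T_of_mem_Θ (τ := τ) hσ hσ2 hγ.le hVdec.antitoneOn ⟨hφ0.le, hφ0lt⟩ hcΘ
  rw [← hVfix φ0 hφ0mem] at hT
  linarith [mul_lt_mul_of_pos_left hV hγ]

/-- Weak affirmative action: beyond the tipping point, any optimal threshold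
for group D is at most the corresponding threshold for group A. -/
theorem weak_affirmative_action (σ τ α γ : ℝ) (hσ : 0 < σ) (hτ : 0 < τ)
    (hστ : σ + τ ≤ 1) (hα : 0 < α) (hα1 : α < 1) (hγ : 0 < γ) (hγ1 : γ < 1)
    (V : ℝ → ℝ) (hVc : ContinuousOn V (Set.Icc (0 : ℝ) 1))
    (hVfix : ∀ φ0 ∈ Set.Icc (0 : ℝ) 1, V φ0 = T σ τ α γ V φ0)
    (hVdec : StrictAntiOn V (Set.Icc (0 : ℝ) 1))
    (φ0 : ℝ) (hφ0gt : φstar σ τ α γ < φ0) (hφ0lt : φ0 < 1)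
    (θ0 : ℝ) (hθ0 : θ0 ∈ Θ σ α φ0)
    (hopt : V φ0 = R σ τ α φ0 θ0 + γ * V (S σ φ0 θ0)) :
    θ0 ≤ θ1 σ τ α φ0 θ0 :=
  weak_affirmative_action_general σ τ α γ hσ hτ hστ hα hα1 hγ V hVfix hVdec φ0 hφ0gt hφ0lt θ0 hθ0
    hopt
end

section
/- (Main theorem: the tipping point for affirmative action.) Let V : [0,1] → ℝ be a continuous Bellman fixed point that is strictly decreasing on [0,1] and differentiable with strictly negative derivative on (0,1). Then: (i) for every state φ0 < φ0*, the threshold σ attains the supremum at φ0 (V(φ0) = R(φ0,σ) + γ·V(S(φ0,σ))) and θ1(φ0,σ) ≥ σ, so the optimal allocation coincides with imposing the common threshold σ(1−α)+τ(1−φ0) on both groups (no affirmative action); (ii) for every state φ0 with φ0* < φ0 < 1, every θ0 ∈ Θ(φ0) that attains the supremum at φ0 and lies in the interior of Θ(φ0) satisfies θ0 < θ1(φ0,θ0) (strict affirmative action). -/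
open Set

noncomputable def bellmanObj (σ τ α γ : ℝ) (f : ℝ → ℝ) (φ0 θ0 : ℝ) : ℝ :=
  R σ τ α φ0 θ0 + γ * f (S σ φ0 θ0)

lemma T_eq_sSup_bellmanObj (σ τ α γ : ℝ) (f : ℝ → ℝ) (φ0 : ℝ) :
    T σ τ α γ f φ0 = sSup (bellmanObj σ τ α γ f φ0 '' Θ σ α φ0) :=
  rfl

/-- The value `R(φ0,σ)/(1-γ)` of always playing `θ0 = σ`, which keeps the state fixed. -/
noncomputable def stationaryValue (σ τ α γ φ0 : ℝ) : ℝ :=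
  (α * (σ + τ) - α ^ 2 * σ / (2 * (1 - φ0))) / (1 - γ)

/-- With `p = 1 - φ0` this reads `2(1-γ)τp² - 2(1-γ)ασp - γα²σ² ≥ 0`; the larger root of this
quadratic is the one in `φstar`. -/
def BelowTipping (σ τ α γ φ0 : ℝ) : Prop :=
  γ * α ^ 2 * σ ^ 2 ≤ 2 * (1 - γ) * ((1 - φ0) * (τ * (1 - φ0) - α * σ))

section Algebra

variable {σ τ α γ φ θ : ℝ}

lemma S_self (σ φ : ℝ) : S σ φ σ = φ := by simp [S]

lemma one_sub_S (σ φ θ : ℝ) : 1 - S σ φ θ = (1 - φ) + φ / (2 * σ) * (σ ^ 2 - θ ^ 2) := by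
  unfold S; ring

lemma S_le_self (hσ : 0 < σ) (hφ : 0 ≤ φ) (hθ : θ ∈ Icc 0 σ) : S σ φ θ ≤ φ := by
  have : 0 ≤ φ / (2 * σ) * (σ ^ 2 - θ ^ 2) :=
    mul_nonneg (by positivity) (by nlinarith [hθ.1, hθ.2])
  unfold S; linarith

lemma half_le_S (hσ : 0 < σ) (hσ1 : σ ≤ 1) (hφ : 0 ≤ φ) : φ / 2 ≤ S σ φ θ := by
  have h : φ / (2 * σ) * (σ ^ 2 - θ ^ 2) ≤ φ / (2 * σ) * σ ^ 2 :=
    mul_le_mul_of_nonneg_left (by nlinarith [sq_nonneg θ]) (by positivity)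
  have h' : φ / (2 * σ) * σ ^ 2 = φ * σ / 2 := by field_simp
  unfold S; nlinarith

lemma θ1_self (hφ : φ < 1) : θ1 σ τ α φ σ = σ + τ - α * σ / (1 - φ) := by
  have : 1 - φ ≠ 0 := by linarith
  unfold θ1; field_simp; ring

lemma θ1_sub_θ1_self (hφ : φ < 1) :
    θ1 σ τ α φ θ - θ1 σ τ α φ σ = φ * (σ - θ) / (1 - φ) := by
  have : 1 - φ ≠ 0 := by linarith
  unfold θ1; field_simp; ring

lemma R_of_lt_one (hφ : φ < 1) : R σ τ α φ θ =
    φ / (2 * σ) * (σ ^ 2 - θ ^ 2) + (1 - φ) / (2 * σ) * ((σ + τ) ^ 2 - θ1 σ τ α φ θ ^ 2) :=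
  if_pos hφ

lemma R_self (hσ : σ ≠ 0) (hφ : φ < 1) :
    R σ τ α φ σ = α * (σ + τ) - α ^ 2 * σ / (2 * (1 - φ)) := by
  have : 1 - φ ≠ 0 := by linarith
  rw [R_of_lt_one hφ, θ1_self hφ]; field_simp; ring

lemma R_self_add_stationaryValue (hσ : σ ≠ 0) (hγ1 : γ < 1) (hφ : φ < 1) :
    R σ τ α φ σ + γ * stationaryValue σ τ α γ φ = stationaryValue σ τ α γ φ := by
  have : 1 - γ ≠ 0 := by linarith
  rw [R_self hσ hφ, stationaryValue]; field_simp; ring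

/-- A difference of squares, using `θ1(θ) - θ1(σ) = φ(σ - θ)/(1 - φ)`. -/
lemma R_self_sub_R (hσ : σ ≠ 0) (hφ : φ < 1) :
    R σ τ α φ σ - R σ τ α φ θ =
      φ * (σ - θ) / (2 * σ) * (θ1 σ τ α φ θ + θ1 σ τ α φ σ - σ - θ) := by
  have : 1 - φ ≠ 0 := by linarith
  have hθ1 : θ1 σ τ α φ θ = θ1 σ τ α φ σ + φ * (σ - θ) / (1 - φ) := by
    linarith [θ1_sub_θ1_self (σ := σ) (τ := τ) (α := α) (θ := θ) hφ]
  rw [R_of_lt_one hφ, R_of_lt_one hφ, hθ1]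
  field_simp; ring

lemma belowTipping_of_root_le (hσ : 0 < σ) (hτ : 0 < τ) (hα : 0 < α) (hγ : 0 < γ)
    (hγ1 : γ < 1) (h : α * σ / (2 * τ) * (1 + √(1 + 2 * τ * γ / (1 - γ))) ≤ 1 - φ) :
    BelowTipping σ τ α γ φ := by
  set s := √(1 + 2 * τ * γ / (1 - γ))
  have hs0 : 0 ≤ s := Real.sqrt_nonneg _
  have hs2 : (1 - γ) * s ^ 2 = (1 - γ) + 2 * τ * γ := by
    have : 1 - γ ≠ 0 := by linarith
    rw [Real.sq_sqrt (by positivity)]; field_simp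
  have hplus : 0 ≤ 2 * τ * (1 - φ) - α * σ * (1 + s) := by
    have : 2 * τ * (α * σ / (2 * τ) * (1 + s)) = α * σ * (1 + s) := by field_simp
    nlinarith
  have hminus : 0 ≤ 2 * τ * (1 - φ) - α * σ * (1 - s) := by
    nlinarith [mul_nonneg (mul_nonneg hα.le hσ.le) hs0]
  have hfactor : (1 - γ) * ((2 * τ * (1 - φ) - α * σ * (1 + s)) *
      (2 * τ * (1 - φ) - α * σ * (1 - s))) =
      2 * τ * (2 * (1 - γ) * ((1 - φ) * (τ * (1 - φ) - α * σ)) - γ * α ^ 2 * σ ^ 2) := by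
    linear_combination (-(α * σ) ^ 2) * hs2
  have := hfactor ▸ mul_nonneg (by linarith : (0 : ℝ) ≤ 1 - γ) (mul_nonneg hplus hminus)
  unfold BelowTipping
  nlinarith

lemma self_le_θ1_self (hσ : 0 < σ) (hα : 0 < α) (hγ : 0 < γ) (hγ1 : γ < 1) (hφ : φ < 1)
    (h : BelowTipping σ τ α γ φ) : σ ≤ θ1 σ τ α φ σ := by
  have hp : 0 < 1 - φ := by linarith
  have : 0 < τ * (1 - φ) - α * σ := by
    by_contra! hneg
    have := mul_nonpos_of_nonneg_of_nonpos hp.le hneg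
    have : 0 < γ * α ^ 2 * σ ^ 2 := by positivity
    unfold BelowTipping at h; nlinarith
  rw [θ1_self hφ, le_sub_iff_add_le, add_le_add_iff_left, div_le_iff₀ hp]
  linarith

/-- Lowering `θ` below `σ` loses at least `φ(σ-θ)(τ(1-φ) - ασ)/(σ(1-φ))` in reward and gains
at most `γα²σφ(σ-θ)/(2(1-γ)(1-φ)²)` in discounted future value; `BelowTipping` compares the two. -/
lemma bellmanObj_stationaryValue_le (hσ : 0 < σ) (hγ : 0 < γ) (hγ1 : γ < 1)
    (hφ : φ ∈ Ico 0 1) (hθ : θ ∈ Icc 0 σ) (h : BelowTipping σ τ α γ φ) :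
    bellmanObj σ τ α γ (stationaryValue σ τ α γ) φ θ ≤ stationaryValue σ τ α γ φ := by
  unfold bellmanObj stationaryValue
  set p := 1 - φ
  set q := 1 - S σ φ θ
  set K := θ1 σ τ α φ θ + θ1 σ τ α φ σ - σ - θ
  have hp : 0 < p := by simp only [p]; linarith [hφ.2]
  have hq : q = p + φ / (2 * σ) * (σ ^ 2 - θ ^ 2) := one_sub_S σ φ θ
  have hpq : p ≤ q := by linarith [S_le_self hσ hφ.1 hθ]
  have hq0 : 0 < q := hp.trans_le hpq
  have hK : 2 * (τ * p - α * σ) / p ≤ K := by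
    have := θ1_sub_θ1_self (σ := σ) (τ := τ) (α := α) (θ := θ) hφ.2
    have : 0 ≤ φ * (σ - θ) / p := div_nonneg (mul_nonneg hφ.1 (by linarith [hθ.2])) hp.le
    have : 2 * (τ * p - α * σ) / p = 2 * (τ - α * σ / p) := by field_simp
    simp only [K, θ1_self hφ.2] at *
    linarith [hθ.2]
  have hcore : γ * α ^ 2 * (σ + θ) / (4 * p * q) ≤ (1 - γ) * K / (2 * σ) := calc
    γ * α ^ 2 * (σ + θ) / (4 * p * q) ≤ γ * α ^ 2 * (2 * σ) / (4 * p * p) := by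
      gcongr; linarith [hθ.2]
    _ = γ * α ^ 2 * σ ^ 2 / (2 * σ * p ^ 2) := by field_simp; norm_num
    _ ≤ 2 * (1 - γ) * (p * (τ * p - α * σ)) / (2 * σ * p ^ 2) :=
      div_le_div_of_nonneg_right h (by positivity)
    _ = (1 - γ) * (2 * (τ * p - α * σ) / p) / (2 * σ) := by field_simp
    _ ≤ (1 - γ) * K / (2 * σ) := by gcongr
  have hloss : α ^ 2 * σ / (2 * p) - α ^ 2 * σ / (2 * q) =
      φ * (σ - θ) * (α ^ 2 * (σ + θ) / (4 * p * q)) := by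
    have hqp : q - p = φ / (2 * σ) * (σ ^ 2 - θ ^ 2) := by linarith
    have : α ^ 2 * σ / (2 * p) - α ^ 2 * σ / (2 * q) = α ^ 2 * σ * (q - p) / (2 * p * q) := by
      field_simp
    rw [this, hqp]; field_simp; ring
  have key : γ * (α ^ 2 * σ / (2 * p) - α ^ 2 * σ / (2 * q)) ≤
      (1 - γ) * (R σ τ α φ σ - R σ τ α φ θ) := by
    rw [hloss, R_self_sub_R hσ.ne' hφ.2]
    have hφθ : 0 ≤ φ * (σ - θ) := mul_nonneg hφ.1 (by linarith [hθ.2])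
    calc γ * (φ * (σ - θ) * (α ^ 2 * (σ + θ) / (4 * p * q)))
        = φ * (σ - θ) * (γ * α ^ 2 * (σ + θ) / (4 * p * q)) := by ring
      _ ≤ φ * (σ - θ) * ((1 - γ) * K / (2 * σ)) := mul_le_mul_of_nonneg_left hcore hφθ
      _ = _ := by ring
  rw [show R σ τ α φ σ = α * (σ + τ) - α ^ 2 * σ / (2 * p) from R_self hσ.ne' hφ.2] at key
  have : 0 < 1 - γ := by linarith
  refine sub_nonneg.mp (le_of_le_of_eq (div_nonneg (sub_nonneg.mpr key) this.le) ?_)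
  field_simp; ring

end Algebra

lemma IsCompact.le_zero_of_le_mul_bound {X : Type*} [TopologicalSpace X] {K : Set X}
    {g : X → ℝ} {γ : ℝ} (hK : IsCompact K) (hg : ContinuousOn g K) (hγ1 : γ < 1)
    (h : ∀ M, (∀ y ∈ K, g y ≤ M) → ∀ x ∈ K, g x ≤ γ * M) : ∀ x ∈ K, g x ≤ 0 := by
  intro x hx
  obtain ⟨x₀, hx₀, hmax⟩ := hK.exists_isMaxOn ⟨x, hx⟩ hg
  have : g x₀ ≤ γ * g x₀ := h (g x₀) (fun y hy => hmax hy) x₀ hx₀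
  have : g x₀ ≤ 0 := by nlinarith
  exact (hmax hx).trans this

section Bellman

variable {σ τ α γ φ θ : ℝ} {V : ℝ → ℝ}

lemma S_mem_Icc_s16 (hσ : 0 < σ) (hσ1 : σ ≤ 1) (hφ : 0 ≤ φ) (hθ : θ ∈ Icc 0 σ) :
    S σ φ θ ∈ Icc 0 φ :=
  ⟨by linarith [half_le_S (θ := θ) hσ hσ1 hφ], S_le_self hσ hφ hθ⟩

lemma Θ_subset_Icc (σ α φ : ℝ) : Θ σ α φ ⊆ Icc 0 σ := fun _ h => h.1

lemma isCompact_Θ (σ α φ : ℝ) : IsCompact (Θ σ α φ) := by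
  refine isCompact_Icc.of_isClosed_subset ?_ (Θ_subset_Icc σ α φ)
  simp only [Θ, Set.ofPred_and, Set.ofPred_mem_eq]
  refine isClosed_Icc.inter (IsClosed.inter ?_ ?_)
  · exact isClosed_le (by fun_prop) continuous_const
  · exact isClosed_le continuous_const (by fun_prop)

lemma self_mem_Θ (hσ : 0 < σ) (hα : 0 ≤ α) (hφ : φ ∈ Icc 0 (1 - α)) : σ ∈ Θ σ α φ := by
  refine ⟨⟨hσ.le, le_rfl⟩, ?_, ?_⟩ <;> simp only [div_self hσ.ne', sub_self, mul_zero]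
  · exact hα
  · linarith [hφ.2]

lemma continuousOn_bellmanObj (hσ : 0 < σ) (hσ1 : σ ≤ 1) (hφ : φ ∈ Ico 0 1)
    (hV : ContinuousOn V (Icc 0 1)) : ContinuousOn (bellmanObj σ τ α γ V φ) (Icc 0 σ) := by
  have hR : R σ τ α φ = fun t => φ / (2 * σ) * (σ ^ 2 - t ^ 2) + (1 - φ) / (2 * σ) *
      ((σ + τ) ^ 2 - ((σ * (1 - α) + (1 - φ) * τ - φ * t) / (1 - φ)) ^ 2) :=
    funext fun _ => R_of_lt_one hφ.2
  refine ContinuousOn.add (by rw [hR]; fun_prop) (continuousOn_const.mul ?_)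
  refine hV.comp (by unfold S; fun_prop) fun t ht => ?_
  exact Icc_subset_Icc_right hφ.2.le (S_mem_Icc_s16 hσ hσ1 hφ.1 ht)

lemma bellmanObj_le_T (hσ : 0 < σ) (hσ1 : σ ≤ 1) (hφ : φ ∈ Ico 0 1)
    (hV : ContinuousOn V (Icc 0 1)) (hθ : θ ∈ Θ σ α φ) :
    bellmanObj σ τ α γ V φ θ ≤ T σ τ α γ V φ :=
  le_csSup ((isCompact_Θ σ α φ).bddAbove_image
    ((continuousOn_bellmanObj hσ hσ1 hφ hV).mono (Θ_subset_Icc σ α φ))) ⟨θ, hθ, rfl⟩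

lemma stationaryValue_le (hσ : 0 < σ) (hσ1 : σ ≤ 1) (hα : 0 < α) (hγ1 : γ < 1)
    (hV : ContinuousOn V (Icc 0 1)) (hfix : ∀ x ∈ Icc 0 1, V x = T σ τ α γ V x)
    (hφ : φ ∈ Icc 0 (1 - α)) : stationaryValue σ τ α γ φ ≤ V φ := by
  have hφ1 : φ < 1 := by linarith [hφ.2]
  have h := bellmanObj_le_T (τ := τ) (γ := γ) hσ hσ1 ⟨hφ.1, hφ1⟩ hV (self_mem_Θ hσ hα.le hφ)
  rw [← hfix φ ⟨hφ.1, hφ1.le⟩, bellmanObj, S_self] at h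
  have := R_self_add_stationaryValue (τ := τ) (α := α) hσ.ne' hγ1 hφ1
  nlinarith

lemma le_stationaryValue (hσ : 0 < σ) (hσ1 : σ ≤ 1) (hα : 0 < α) (hγ : 0 < γ) (hγ1 : γ < 1)
    (hV : ContinuousOn V (Icc 0 1)) (hfix : ∀ x ∈ Icc 0 1, V x = T σ τ α γ V x)
    {c : ℝ} (hc : c ≤ 1 - α) (hbelow : ∀ x ∈ Icc 0 c, BelowTipping σ τ α γ x) :
    ∀ φ ∈ Icc 0 c, V φ ≤ stationaryValue σ τ α γ φ := by
  have hc1 : c < 1 := by linarith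
  have hW : ContinuousOn (stationaryValue σ τ α γ) (Icc 0 c) := by
    refine ContinuousOn.div_const (continuousOn_const.sub
      (continuousOn_const.div (by fun_prop) fun x hx => ?_)) _
    linarith [hx.2]
  have := isCompact_Icc.le_zero_of_le_mul_bound (g := fun x => V x - stationaryValue σ τ α γ x)
    ((hV.mono (Icc_subset_Icc_right hc1.le)).sub hW) hγ1 fun M hM φ hφ => by
      have hφ1 : φ < 1 := hφ.2.trans_lt hc1
      show V φ - stationaryValue σ τ α γ φ ≤ γ * M
      rw [sub_le_iff_le_add', hfix φ ⟨hφ.1, hφ1.le⟩, T_eq_sSup_bellmanObj]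
      refine csSup_le ((Set.nonempty_of_mem (self_mem_Θ hσ hα.le ⟨hφ.1, hφ.2.trans hc⟩)).image _) ?_
      rintro _ ⟨θ, hθ, rfl⟩
      have hS := S_mem_Icc_s16 hσ hσ1 hφ.1 hθ.1
      have hVS : V (S σ φ θ) - stationaryValue σ τ α γ (S σ φ θ) ≤ M :=
        hM _ ⟨hS.1, hS.2.trans hφ.2⟩
      have := bellmanObj_stationaryValue_le hσ hγ hγ1 ⟨hφ.1, hφ1⟩ hθ.1 (hbelow φ hφ)
      unfold bellmanObj at this ⊢
      nlinarith
  exact fun φ hφ => sub_nonpos.mp (this φ hφ)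

end Bellman

section FirstOrder

variable {σ τ α γ φ θ : ℝ} {V : ℝ → ℝ}

lemma hasDerivAt_S (hσ : σ ≠ 0) : HasDerivAt (S σ φ) (φ * θ / σ) θ := by
  have h := (((hasDerivAt_pow 2 θ).const_sub (σ ^ 2)).const_mul (φ / (2 * σ))).const_sub φ
  refine h.congr_deriv ?_
  field_simp; ring

lemma hasDerivAt_R (hσ : σ ≠ 0) (hφ : φ < 1) :
    HasDerivAt (R σ τ α φ) (φ / σ * (θ1 σ τ α φ θ - θ)) θ := by
  have : 1 - φ ≠ 0 := by linarith
  have hR : R σ τ α φ = fun t => φ / (2 * σ) * (σ ^ 2 - t ^ 2) + (1 - φ) / (2 * σ) *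
      ((σ + τ) ^ 2 - ((σ * (1 - α) + (1 - φ) * τ - φ * t) / (1 - φ)) ^ 2) :=
    funext fun _ => R_of_lt_one hφ
  have hθ1 : HasDerivAt (fun t => (σ * (1 - α) + (1 - φ) * τ - φ * t) / (1 - φ))
      (-(φ * 1) / (1 - φ)) θ :=
    (((hasDerivAt_id θ).const_mul φ).const_sub _).div_const _
  have h := (((hasDerivAt_pow 2 θ).const_sub (σ ^ 2)).const_mul (φ / (2 * σ))).add
    (((hθ1.pow 2).const_sub ((σ + τ) ^ 2)).const_mul ((1 - φ) / (2 * σ)))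
  rw [hR]
  refine h.congr_deriv ?_
  rw [θ1]; push_cast; field_simp; ring

lemma lt_θ1_of_isLocalMax (hσ : 0 < σ) (hγ : 0 < γ) (hφ : φ ∈ Ioo 0 1) (hθ : 0 < θ)
    (hmax : IsLocalMax (bellmanObj σ τ α γ V φ) θ) {d : ℝ} (hd : HasDerivAt V d (S σ φ θ))
    (hd0 : d < 0) : θ < θ1 σ τ α φ θ := by
  have hderiv := (hasDerivAt_R (τ := τ) (α := α) (θ := θ) hσ.ne' hφ.2).add
    ((hd.comp θ (hasDerivAt_S hσ.ne')).const_mul γ)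
  have hzero := hmax.hasDerivAt_eq_zero hderiv
  have hfoc : φ * (θ1 σ τ α φ θ - θ + γ * d * θ) = 0 := by
    field_simp at hzero; linarith
  have := mul_pos (mul_pos hγ (neg_pos.mpr hd0)) hθ
  nlinarith [(mul_eq_zero.mp hfoc).resolve_left hφ.1.ne']

lemma isLocalMax_bellmanObj_of_mem_interior (hσ : 0 < σ) (hσ1 : σ ≤ 1) (hφ : φ ∈ Ico 0 1)
    (hV : ContinuousOn V (Icc 0 1)) (hθ : θ ∈ interior (Θ σ α φ))
    (hopt : T σ τ α γ V φ = bellmanObj σ τ α γ V φ θ) :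
    IsLocalMax (bellmanObj σ τ α γ V φ) θ := by
  filter_upwards [mem_interior_iff_mem_nhds.mp hθ] with t ht
  exact hopt ▸ bellmanObj_le_T hσ hσ1 hφ hV ht

end FirstOrder

lemma φstar_eq_min_of_pos {σ τ α γ : ℝ} (h : 0 < φstar σ τ α γ) : φstar σ τ α γ =
    min (1 - α) (1 - α * σ / (2 * τ) * (1 + √(1 + 2 * τ * γ / (1 - γ)))) :=
  max_eq_right (not_lt.mp fun hneg => h.ne' (max_eq_left hneg.le))

theorem tipping_point_main_general (σ τ α γ : ℝ) (hσ : 0 < σ) (hτ : 0 < τ)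
    (hστ : σ + τ ≤ 1) (hα : 0 < α) (hγ : 0 < γ) (hγ1 : γ < 1)
    (V : ℝ → ℝ) (hVc : ContinuousOn V (Set.Icc (0 : ℝ) 1))
    (hVfix : ∀ φ0 ∈ Set.Icc (0 : ℝ) 1, V φ0 = T σ τ α γ V φ0)
    (hVdiff : ∀ x ∈ Set.Ioo (0 : ℝ) 1, ∃ d : ℝ, HasDerivAt V d x ∧ d < 0) :
    (∀ φ0 : ℝ, 0 ≤ φ0 → φ0 < φstar σ τ α γ →
      V φ0 = R σ τ α φ0 σ + γ * V (S σ φ0 σ) ∧ σ ≤ θ1 σ τ α φ0 σ) ∧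
    (∀ φ0 : ℝ, φstar σ τ α γ < φ0 → φ0 < 1 →
      ∀ θ0 ∈ Θ σ α φ0,
        V φ0 = R σ τ α φ0 θ0 + γ * V (S σ φ0 θ0) →
        θ0 ∈ interior (Θ σ α φ0) →
        θ0 < θ1 σ τ α φ0 θ0) := by
  have hσ1 : σ ≤ 1 := by linarith
  refine ⟨fun φ hφ0 hφ => ?_, fun φ hφ hφ1 θ _ hopt hθ => ?_⟩
  · have hstar := φstar_eq_min_of_pos (hφ0.trans_lt hφ)
    have hc : φstar σ τ α γ ≤ 1 - α := hstar ▸ min_le_left _ _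
    have hbelow : ∀ x ∈ Icc 0 (φstar σ τ α γ), BelowTipping σ τ α γ x := fun x hx =>
      belowTipping_of_root_le hσ hτ hα hγ hγ1 (by linarith [hstar ▸ min_le_right _ _, hx.2])
    have hφ1 : φ < 1 := by linarith
    have hVW : V φ = stationaryValue σ τ α γ φ :=
      (le_stationaryValue hσ hσ1 hα hγ hγ1 hVc hVfix hc hbelow φ ⟨hφ0, hφ.le⟩).antisymm
        (stationaryValue_le hσ hσ1 hα hγ1 hVc hVfix ⟨hφ0, by linarith⟩)
    refine ⟨?_, self_le_θ1_self hσ hα hγ hγ1 hφ1 (hbelow φ ⟨hφ0, hφ.le⟩)⟩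
    rw [S_self, hVW, R_self_add_stationaryValue hσ.ne' hγ1 hφ1]
  · have hφ0 : 0 < φ := (le_max_left _ _).trans_lt hφ
    have hθσ : θ ∈ Ioo 0 σ := by
      simpa only [interior_Icc] using interior_mono (Θ_subset_Icc σ α φ) hθ
    have hS := half_le_S (θ := θ) hσ hσ1 hφ0.le
    obtain ⟨d, hd, hd0⟩ := hVdiff _
      ⟨by linarith, (S_le_self hσ hφ0.le (Ioo_subset_Icc_self hθσ)).trans_lt hφ1⟩
    refine lt_θ1_of_isLocalMax hσ hγ ⟨hφ0, hφ1⟩ hθσ.1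
      (isLocalMax_bellmanObj_of_mem_interior hσ hσ1 ⟨hφ0.le, hφ1⟩ hVc hθ ?_) hd hd0
    rw [← hVfix φ ⟨hφ0.le, hφ1.le⟩, hopt, bellmanObj]

/-- Main theorem (tipping point for affirmative action): below φ0* the
threshold σ is optimal and there is no affirmative action; strictly between
φ0* and 1, every interior optimal threshold uses strict affirmative action. -/
theorem tipping_point_main (σ τ α γ : ℝ) (hσ : 0 < σ) (hτ : 0 < τ)
    (hστ : σ + τ ≤ 1) (hα : 0 < α) (hα1 : α < 1) (hγ : 0 < γ) (hγ1 : γ < 1)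
    (V : ℝ → ℝ) (hVc : ContinuousOn V (Set.Icc (0 : ℝ) 1))
    (hVfix : ∀ φ0 ∈ Set.Icc (0 : ℝ) 1, V φ0 = T σ τ α γ V φ0)
    (hVdec : StrictAntiOn V (Set.Icc (0 : ℝ) 1))
    (hVdiff : ∀ x ∈ Set.Ioo (0 : ℝ) 1, ∃ d : ℝ, HasDerivAt V d x ∧ d < 0) :
    (∀ φ0 : ℝ, 0 ≤ φ0 → φ0 < φstar σ τ α γ →
      V φ0 = R σ τ α φ0 σ + γ * V (S σ φ0 σ) ∧ σ ≤ θ1 σ τ α φ0 σ) ∧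
    (∀ φ0 : ℝ, φstar σ τ α γ < φ0 → φ0 < 1 →
      ∀ θ0 ∈ Θ σ α φ0,
        V φ0 = R σ τ α φ0 θ0 + γ * V (S σ φ0 θ0) →
        θ0 ∈ interior (Θ σ α φ0) →
        θ0 < θ1 σ τ α φ0 θ0) :=
  tipping_point_main_general σ τ α γ hσ hτ hστ hα hγ hγ1 V hVc hVfix hVdiff
end
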